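/- arXiv:1609.02206 — 6 statements merged into one kernel-verified Lean document; each statement's English description precedes it below -/
import Mathlib

section
/- For real parameters x₁ > 0, x₂ ≥ 0 with x₁ + x₂ > 1, the following two conditions are equivalent: (i) −1 < ⟨pᵢ, p_{i+1}⟩ < 1 for all i ∈ ℤ, and ⟨pᵢ, pⱼ⟩ ∉ [−1, 1] for all i, j ∈ ℤ with i − j not congruent to 0, 1, or −1 modulo n; (ii) (1−c₁)x₁ + (1−c_m)x₂ < 2 < (1−cᵢ)x₁ + (1−c_{mi})x₂ for all integers i with 2 ≤ i ≤ n/2. -/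
open Real Matrix

/-- The bilinear form of signature (−−−−+) on ℝ⁵. -/
noncomputable def B5 (x y : Fin 5 → ℝ) : ℝ :=
  -(x 0 * y 0) - x 1 * y 1 - x 2 * y 2 - x 3 * y 3 + x 4 * y 4

/-- cᵢ = cos(2iπ/n). -/
noncomputable def cc (n : ℕ) (i : ℤ) : ℝ := Real.cos (2 * i * π / n)

/-- sᵢ = sin(2iπ/n). -/
noncomputable def ss (n : ℕ) (i : ℤ) : ℝ := Real.sin (2 * i * π / n)

/-- pᵢ = (cᵢ√x₁, sᵢ√x₁, c_{mi}√x₂, s_{mi}√x₂, √(x₁+x₂−1)) ∈ ℝ⁵. -/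
noncomputable def pp (n m : ℕ) (x₁ x₂ : ℝ) (i : ℤ) : Fin 5 → ℝ :=
  ![cc n i * Real.sqrt x₁, ss n i * Real.sqrt x₁,
    cc n (m * i) * Real.sqrt x₂, ss n (m * i) * Real.sqrt x₂,
    Real.sqrt (x₁ + x₂ - 1)]

lemma cc_neg (n : ℕ) (k : ℤ) : cc n (-k) = cc n k := by
  unfold cc
  rw [show (2 * ((-k : ℤ) : ℝ) * π / n) = -(2 * k * π / n) by push_cast; ring, Real.cos_neg]

lemma cc_add_mul (n : ℕ) (hn : (n:ℝ) ≠ 0) (k t : ℤ) : cc n (k + t * n) = cc n k := by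
  unfold cc
  rw [show (2 * ((k + t * n : ℤ) : ℝ) * π / n) = 2 * k * π / n + (t : ℝ) * (2 * π) by
    push_cast; field_simp]
  exact Real.cos_add_int_mul_two_pi _ t

lemma F_per (n m : ℕ) (hn : (n:ℝ) ≠ 0) (x₁ x₂ : ℝ) (k t : ℤ) :
    (1 - cc n (k + t * n)) * x₁ + (1 - cc n (m * (k + t * n))) * x₂
      = (1 - cc n k) * x₁ + (1 - cc n (m * k)) * x₂ := by
  rw [cc_add_mul n hn k t, show (m:ℤ) * (k + t * n) = m * k + (m * t) * n by ring,
    cc_add_mul n hn]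

lemma F_neg (n m : ℕ) (x₁ x₂ : ℝ) (k : ℤ) :
    (1 - cc n (-k)) * x₁ + (1 - cc n (m * (-k))) * x₂
      = (1 - cc n k) * x₁ + (1 - cc n (m * k)) * x₂ := by
  rw [show (m:ℤ) * (-k) = -(m * k) by ring, cc_neg, cc_neg]

lemma cc_one_lt (n : ℕ) (hn : 6 ≤ n) : cc n 1 < 1 := by
  have hnR : (0:ℝ) < n := by exact_mod_cast Nat.pos_of_ne_zero (by omega)
  have hn1 : (1:ℝ) < n := by exact_mod_cast (by omega : 1 < n)
  unfold cc
  have hx : (0:ℝ) < 2 * (1:ℤ) * π / n := by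
    push_cast; exact div_pos (by positivity) hnR
  have hx2 : 2 * ((1:ℤ):ℝ) * π / n < 2 * π := by
    push_cast
    rw [mul_one]
    exact div_lt_self (by positivity) hn1
  refine lt_of_le_of_ne (Real.cos_le_one _) fun h => ?_
  have := Real.cos_eq_one_iff_of_lt_of_lt (by linarith [Real.pi_pos]) hx2 |>.mp h
  linarith

lemma B5_pp (n m : ℕ) (x₁ x₂ : ℝ) (hx₁ : 0 ≤ x₁) (hx₂ : 0 ≤ x₂) (hx : 1 ≤ x₁ + x₂) (i j : ℤ) :
    B5 (pp n m x₁ x₂ i) (pp n m x₁ x₂ j)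
      = (1 - cc n (i - j)) * x₁ + (1 - cc n (m * (i - j))) * x₂ - 1 := by
  have h1 : Real.sqrt x₁ * Real.sqrt x₁ = x₁ := Real.mul_self_sqrt hx₁
  have h2 : Real.sqrt x₂ * Real.sqrt x₂ = x₂ := Real.mul_self_sqrt hx₂
  have h3 : Real.sqrt (x₁ + x₂ - 1) * Real.sqrt (x₁ + x₂ - 1) = x₁ + x₂ - 1 :=
    Real.mul_self_sqrt (by linarith)
  have hcos : cc n i * cc n j + ss n i * ss n j = cc n (i - j) := by
    unfold cc ss
    rw [← Real.cos_sub]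
    congr 1
    push_cast
    ring
  have hcosm : cc n (m * i) * cc n (m * j) + ss n (m * i) * ss n (m * j) = cc n (m * (i - j)) := by
    unfold cc ss
    rw [← Real.cos_sub]
    congr 1
    push_cast
    ring
  simp only [B5, pp, Matrix.cons_val_zero, Matrix.cons_val_one, Matrix.head_cons,
    Matrix.cons_val_two, Matrix.tail_cons, Matrix.cons_val_three, Matrix.cons_val_four,
    Matrix.cons_val_fin_one]
  linear_combination (-(cc n i * cc n j) - ss n i * ss n j) * h1 +
    (-(cc n (m*i) * cc n (m*j)) - ss n (m*i) * ss n (m*j)) * h2 + h3 - x₁ * hcos - x₂ * hcosm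

lemma key_claim (n m : ℕ) (hn6 : 6 ≤ n) (x₁ x₂ : ℝ)
    (h2 : ∀ i : ℤ, 2 ≤ i → 2 * i ≤ n → 2 < (1 - cc n i) * x₁ + (1 - cc n (m * i)) * x₂)
    (k : ℤ) (hd0 : ¬ (n:ℤ) ∣ k) (hd1 : ¬ (n:ℤ) ∣ k - 1) (hd2 : ¬ (n:ℤ) ∣ k + 1) :
    2 < (1 - cc n k) * x₁ + (1 - cc n (m * k)) * x₂ := by
  have hn0 : (n:ℝ) ≠ 0 := by
    have : (0:ℝ) < n := by exact_mod_cast Nat.pos_of_ne_zero (by omega)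
    linarith
  have hnZ : ((6:ℤ)) ≤ n := by exact_mod_cast hn6
  obtain ⟨r, q, hk, hr0, hrn⟩ : ∃ r q : ℤ, r + q * n = k ∧ 0 ≤ r ∧ r < n :=
    ⟨k % n, k / n, by rw [mul_comm]; exact Int.emod_add_mul_ediv k n,
      Int.emod_nonneg k (by omega), Int.emod_lt_of_pos k (by omega)⟩
  have hFk : (1 - cc n k) * x₁ + (1 - cc n (m * k)) * x₂
      = (1 - cc n r) * x₁ + (1 - cc n (m * r)) * x₂ := by
    conv_lhs => rw [← hk]
    exact F_per n m hn0 x₁ x₂ r q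
  have hrne0 : r ≠ 0 := by intro h; exact hd0 ⟨q, by linear_combination h - hk⟩
  have hrne1 : r ≠ 1 := by intro h; exact hd1 ⟨q, by linear_combination h - hk⟩
  have hrnen1 : r ≠ (n:ℤ) - 1 := by intro h; exact hd2 ⟨q + 1, by linear_combination h - hk⟩
  rw [hFk]
  by_cases hhalf : 2 * r ≤ n
  · exact h2 r (by omega) hhalf
  · have heq : (1 - cc n ((n:ℤ) - r)) * x₁ + (1 - cc n (m * ((n:ℤ) - r))) * x₂
        = (1 - cc n r) * x₁ + (1 - cc n (m * r)) * x₂ := by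
      rw [show ((n:ℤ) - r) = -(r - n) by ring, F_neg,
        show (r - (n:ℤ)) = r + (-1) * n by ring, F_per n m hn0]
    rw [← heq]
    exact h2 ((n:ℤ) - r) (by omega) (by omega)

theorem stmt3 (n m : ℕ) (hn : Even n) (hn6 : 6 ≤ n) (hm1 : 1 < m) (hm2 : 2 * m < n)
    (x₁ x₂ : ℝ) (hx₁ : 0 < x₁) (hx₂ : 0 ≤ x₂) (hx : 1 < x₁ + x₂) :
    ((∀ i : ℤ, -1 < B5 (pp n m x₁ x₂ i) (pp n m x₁ x₂ (i + 1)) ∧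
        B5 (pp n m x₁ x₂ i) (pp n m x₁ x₂ (i + 1)) < 1) ∧
     (∀ i j : ℤ, ¬ (i ≡ j [ZMOD n]) → ¬ (i - j ≡ 1 [ZMOD n]) → ¬ (i - j ≡ -1 [ZMOD n]) →
        B5 (pp n m x₁ x₂ i) (pp n m x₁ x₂ j) ∉ Set.Icc (-1 : ℝ) 1))
    ↔
    ((1 - cc n 1) * x₁ + (1 - cc n m) * x₂ < 2 ∧
     ∀ i : ℤ, 2 ≤ i → 2 * i ≤ n → 2 < (1 - cc n i) * x₁ + (1 - cc n (m * i)) * x₂) := by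
  have hnZ : ((6:ℤ)) ≤ n := by exact_mod_cast hn6
  have hB : ∀ i j : ℤ, B5 (pp n m x₁ x₂ i) (pp n m x₁ x₂ j)
      = (1 - cc n (i - j)) * x₁ + (1 - cc n (m * (i - j))) * x₂ - 1 :=
    B5_pp n m x₁ x₂ hx₁.le hx₂ hx.le
  have hcle : ∀ k : ℤ, cc n k ≤ 1 := fun k => Real.cos_le_one _
  have hF0 : ∀ k : ℤ, 0 ≤ (1 - cc n k) * x₁ + (1 - cc n (m * k)) * x₂ := fun k =>
    add_nonneg (mul_nonneg (by linarith [hcle k]) hx₁.le)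
      (mul_nonneg (by linarith [hcle ((m : ℤ) * k)]) hx₂)
  have hF1 : 0 < (1 - cc n 1) * x₁ + (1 - cc n (m : ℤ)) * x₂ := by
    have hc1 := cc_one_lt n hn6
    have hc2 : (0:ℝ) ≤ (1 - cc n (m : ℤ)) * x₂ :=
      mul_nonneg (by linarith [hcle (m : ℤ)]) hx₂
    nlinarith
  constructor
  · rintro ⟨h1, h2⟩
    constructor
    · have h := (h1 0).2
      rw [hB 0 (0 + 1), show (0:ℤ) - (0 + 1) = -1 by ring, F_neg n m x₁ x₂ 1, mul_one] at h
      linarith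
    · intro i hi2 hin
      have hne0 : ¬ (i ≡ (0:ℤ) [ZMOD (n:ℕ)]) := by
        intro h
        have hd := Int.modEq_iff_dvd.mp h
        have hd' : (n:ℤ) ∣ i := by
          rw [show i = -((0:ℤ) - i) by ring]; exact dvd_neg.mpr hd
        have := Int.le_of_dvd (by omega) hd'
        omega
      have hne1 : ¬ (i - 0 ≡ 1 [ZMOD (n:ℕ)]) := by
        intro h
        have hd := Int.modEq_iff_dvd.mp h
        have hd' : (n:ℤ) ∣ i - 1 := by
          rw [show i - 1 = -(1 - (i - 0)) by ring]; exact dvd_neg.mpr hd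
        have := Int.le_of_dvd (by omega) hd'
        omega
      have hnen1 : ¬ (i - 0 ≡ -1 [ZMOD (n:ℕ)]) := by
        intro h
        have hd := Int.modEq_iff_dvd.mp h
        have hd' : (n:ℤ) ∣ i + 1 := by
          rw [show i + 1 = -(-1 - (i - 0)) by ring]; exact dvd_neg.mpr hd
        have := Int.le_of_dvd (by omega) hd'
        omega
      have h := h2 i 0 hne0 hne1 hnen1
      rw [hB i 0, sub_zero] at h
      by_contra hcon
      push_neg at hcon
      exact h ⟨by linarith [hF0 i], by linarith⟩
  · rintro ⟨h1, h2⟩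
    constructor
    · intro i
      rw [hB i (i + 1), show i - (i + 1) = -1 by ring, F_neg n m x₁ x₂ 1, mul_one]
      constructor
      · linarith [hF1]
      · linarith [h1]
    · intro i j hij h1' h2'
      have hd0 : ¬ (n:ℤ) ∣ (i - j) := by
        intro hd
        exact hij (Int.modEq_iff_dvd.mpr
          (by rw [show j - i = -(i - j) by ring]; exact dvd_neg.mpr hd))
      have hd1 : ¬ (n:ℤ) ∣ (i - j) - 1 := by
        intro hd
        exact h1' (Int.modEq_iff_dvd.mpr
          (by rw [show (1:ℤ) - (i - j) = -((i - j) - 1) by ring]; exact dvd_neg.mpr hd))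
      have hd2 : ¬ (n:ℤ) ∣ (i - j) + 1 := by
        intro hd
        exact h2' (Int.modEq_iff_dvd.mpr
          (by rw [show (-1:ℤ) - (i - j) = -((i - j) + 1) by ring]; exact dvd_neg.mpr hd))
      have hkey := key_claim n m hn6 x₁ x₂ h2 (i - j) hd0 hd1 hd2
      rw [hB i j]
      intro hmem
      exact absurd hmem.2 (by linarith)
end

section
/- One has 1 < 2/(1−c₂) < 2/(1−c₁); and for every x₁ with 2/(1−c₂) < x₁ < 2/(1−c₁) and x₂ = 0, the inequalities (3.2) hold, namely x₁ > 0, x₂ ≥ 0, x₁ + x₂ > 1, and (1−c₁)x₁ + (1−c_m)x₂ < 2 < (1−cᵢ)x₁ + (1−c_{mi})x₂ for all integers i with 2 ≤ i ≤ n/2. In particular the region R ⊂ ℝ² defined by (3.2) is nonempty. -/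
open Real

theorem stmt4 (n m : ℕ) (hn : Even n) (hn6 : 6 ≤ n) (hm1 : 1 < m) (hm2 : 2 * m < n) :
    (1 < 2 / (1 - cc n 2) ∧ 2 / (1 - cc n 2) < 2 / (1 - cc n 1)) ∧
    (∀ x₁ x₂ : ℝ, 2 / (1 - cc n 2) < x₁ → x₁ < 2 / (1 - cc n 1) → x₂ = 0 →
      0 < x₁ ∧ 0 ≤ x₂ ∧ 1 < x₁ + x₂ ∧
      (1 - cc n 1) * x₁ + (1 - cc n m) * x₂ < 2 ∧
      (∀ i : ℤ, 2 ≤ i → 2 * i ≤ n →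
        2 < (1 - cc n i) * x₁ + (1 - cc n (m * i)) * x₂)) ∧
    (∃ x₁ x₂ : ℝ,
      0 < x₁ ∧ 0 ≤ x₂ ∧ 1 < x₁ + x₂ ∧
      (1 - cc n 1) * x₁ + (1 - cc n m) * x₂ < 2 ∧
      (∀ i : ℤ, 2 ≤ i → 2 * i ≤ n →
        2 < (1 - cc n i) * x₁ + (1 - cc n (m * i)) * x₂)) := by
  have hπ := Real.pi_pos
  have hN : (6:ℝ) ≤ (n:ℝ) := by exact_mod_cast hn6
  have hN0 : (0:ℝ) < (n:ℝ) := by linarith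
  -- basic cosine facts
  have hc1 : cc n 1 = Real.cos (2 * π / n) := by simp [cc]
  have hc2 : cc n 2 = Real.cos (2 * 2 * π / n) := by simp [cc]
  have ha1pos : 0 < 2 * π / (n:ℝ) := by positivity
  have ha2pi : 2 * 2 * π / (n:ℝ) < π := by
    rw [div_lt_iff₀ hN0]; nlinarith
  have ha12 : 2 * π / (n:ℝ) < 2 * 2 * π / (n:ℝ) := by
    rw [div_lt_div_iff₀ hN0 hN0]; nlinarith
  have hc1lt : cc n 1 < 1 := by
    rw [hc1]
    have := Real.cos_lt_cos_of_nonneg_of_le_pi (le_refl (0:ℝ))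
      (le_of_lt (lt_trans ha12 ha2pi)) ha1pos
    simpa using this
  have hc21 : cc n 2 < cc n 1 := by
    rw [hc1, hc2]
    exact Real.cos_lt_cos_of_nonneg_of_le_pi (le_of_lt ha1pos) (le_of_lt ha2pi) ha12
  have hc2gt : -1 < cc n 2 := by
    rw [hc2]
    have := Real.cos_lt_cos_of_nonneg_of_le_pi
      (by positivity : (0:ℝ) ≤ 2 * 2 * π / n) (le_refl π) ha2pi
    simpa [Real.cos_pi] using this
  have h1pos : 0 < 1 - cc n 1 := by linarith
  have h2pos : 0 < 1 - cc n 2 := by linarith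
  -- cᵢ ≤ c₂ for 2 ≤ i, 2i ≤ n
  have hkey : ∀ i : ℤ, 2 ≤ i → 2 * i ≤ n → cc n i ≤ cc n 2 := by
    intro i hi hin
    have hiR : (2:ℝ) ≤ (i:ℝ) := by exact_mod_cast hi
    have hinR : 2 * (i:ℝ) ≤ (n:ℝ) := by exact_mod_cast hin
    rw [hc2]
    unfold cc
    apply Real.cos_le_cos_of_nonneg_of_le_pi
    · positivity
    · rw [div_le_iff₀ hN0]; nlinarith
    · gcongr
  -- first conjunct
  have hA1 : 1 < 2 / (1 - cc n 2) := by
    rw [lt_div_iff₀ h2pos]; linarith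
  have hA2 : 2 / (1 - cc n 2) < 2 / (1 - cc n 1) := by
    apply div_lt_div_of_pos_left (by norm_num) h1pos (by linarith)
  -- main implication
  have hB : ∀ x₁ x₂ : ℝ, 2 / (1 - cc n 2) < x₁ → x₁ < 2 / (1 - cc n 1) → x₂ = 0 →
      0 < x₁ ∧ 0 ≤ x₂ ∧ 1 < x₁ + x₂ ∧
      (1 - cc n 1) * x₁ + (1 - cc n m) * x₂ < 2 ∧
      (∀ i : ℤ, 2 ≤ i → 2 * i ≤ n →
        2 < (1 - cc n i) * x₁ + (1 - cc n (m * i)) * x₂) := by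
    intro x₁ x₂ hx2 hx1 hx0
    subst hx0
    have hx1' : 1 < x₁ := lt_trans hA1 hx2
    have hup : (1 - cc n 1) * x₁ < 2 := by
      rw [lt_div_iff₀ h1pos] at hx1; linarith [hx1]
    have hlo : 2 < (1 - cc n 2) * x₁ := by
      rw [div_lt_iff₀ h2pos] at hx2; linarith [hx2]
    refine ⟨by linarith, le_refl 0, by linarith, by linarith, ?_⟩
    intro i hi hin
    have hci := hkey i hi hin
    have hx1pos : 0 < x₁ := by linarith
    nlinarith [hci, hlo, hx1pos]
  refine ⟨⟨hA1, hA2⟩, hB, ?_⟩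
  refine ⟨(2 / (1 - cc n 2) + 2 / (1 - cc n 1)) / 2, 0, ?_⟩
  exact hB _ 0 (by linarith) (by linarith) rfl
end

section
/- Assume g₂ + 1 > 0. Then (rσ)p₀ = −p₁ and (rσ)p₁ = p₀ + 2g₁p₁; that is, the linear span U of p₀ and p₁ is rσ-stable and the matrix of rσ restricted to U in the basis p₀, p₁ is [[0,1],[−1,2g₁]]. -/
open Real Matrix

/-- gᵢ = ⟨p₀, pᵢ⟩. -/
noncomputable def gg (n m : ℕ) (x₁ x₂ : ℝ) (i : ℤ) : ℝ :=
  B5 (pp n m x₁ x₂ 0) (pp n m x₁ x₂ i)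

/-- The block-diagonal matrix with rotation blocks by 2π/n and 2πm/n and a final 1. -/
noncomputable def rot (n m : ℕ) : Matrix (Fin 5) (Fin 5) ℝ :=
  !![Real.cos (2*π/n), -Real.sin (2*π/n), 0, 0, 0;
     Real.sin (2*π/n),  Real.cos (2*π/n), 0, 0, 0;
     0, 0, Real.cos (2*π*m/n), -Real.sin (2*π*m/n), 0;
     0, 0, Real.sin (2*π*m/n),  Real.cos (2*π*m/n), 0;
     0, 0, 0, 0, 1]

/-- The reflection σ in the middle slice M₀:
    σ(v) = v + 2⟨v,p₀⟩p₀ + (⟨v, p₁ − p_{n−1}⟩/(g₂+1))(p₁ − p_{n−1}). -/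
noncomputable def sig (n m : ℕ) (x₁ x₂ : ℝ) (v : Fin 5 → ℝ) : Fin 5 → ℝ :=
  v + (2 * B5 v (pp n m x₁ x₂ 0)) • pp n m x₁ x₂ 0 +
    (B5 v (pp n m x₁ x₂ 1 - pp n m x₁ x₂ ((n : ℤ) - 1)) / (gg n m x₁ x₂ 2 + 1)) •
      (pp n m x₁ x₂ 1 - pp n m x₁ x₂ ((n : ℤ) - 1))

/-- The composition rσ. -/
noncomputable def rsig (n m : ℕ) (x₁ x₂ : ℝ) (v : Fin 5 → ℝ) : Fin 5 → ℝ :=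
  (rot n m).mulVec (sig n m x₁ x₂ v)

lemma cc_shift (n : ℕ) (hn : (n:ℝ) ≠ 0) (k j : ℤ) : cc n (k + j*n) = cc n k := by
  have h : (2 * ((k + j*(n:ℤ) : ℤ) : ℝ) * π / n) = 2*(k:ℝ)*π/n + (j:ℝ)*(2*π) := by
    push_cast; field_simp
  rw [cc, cc, h, Real.cos_add_int_mul_two_pi]

lemma ss_shift (n : ℕ) (hn : (n:ℝ) ≠ 0) (k j : ℤ) : ss n (k + j*n) = ss n k := by
  have h : (2 * ((k + j*(n:ℤ) : ℤ) : ℝ) * π / n) = 2*(k:ℝ)*π/n + (j:ℝ)*(2*π) := by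
    push_cast; field_simp
  rw [ss, ss, h, Real.sin_add_int_mul_two_pi]

lemma ss_neg (n : ℕ) (k : ℤ) : ss n (-k) = -ss n k := by
  have h : (2 * ((-k : ℤ) : ℝ) * π / n) = -(2*(k:ℝ)*π/n) := by push_cast; ring
  rw [ss, ss, h, Real.sin_neg]

lemma cc_two' (n : ℕ) (k : ℤ) : cc n (2*k) = cc n k ^ 2 - ss n k ^ 2 := by
  have h : (2 * ((2*k : ℤ) : ℝ) * π / n) = 2*(2*(k:ℝ)*π/n) := by push_cast; ring
  rw [cc, cc, ss, h, Real.cos_two_mul']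

lemma pyth (n : ℕ) (k : ℤ) : ss n k ^ 2 + cc n k ^ 2 = 1 := by
  rw [cc, ss]; exact Real.sin_sq_add_cos_sq _

lemma cc_zero (n : ℕ) : cc n 0 = 1 := by simp [cc]
lemma ss_zero (n : ℕ) : ss n 0 = 0 := by simp [ss]

lemma B5_sub (x y z : Fin 5 → ℝ) : B5 x (y - z) = B5 x y - B5 x z := by
  simp only [B5, Pi.sub_apply]; ring

lemma sig_lin (n m : ℕ) (x₁ x₂ a b : ℝ) (x y : Fin 5 → ℝ) :
    sig n m x₁ x₂ (a • x + b • y) = a • sig n m x₁ x₂ x + b • sig n m x₁ x₂ y := by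
  funext i
  simp only [sig, B5, Pi.add_apply, Pi.smul_apply, Pi.sub_apply, smul_eq_mul]
  ring

theorem stmt7 (n m : ℕ) (hn : Even n) (hn6 : 6 ≤ n) (hm1 : 1 < m) (hm2 : 2 * m < n)
    (x₁ x₂ : ℝ) (hx₁ : 0 < x₁) (hx₂ : 0 ≤ x₂) (hx : 1 < x₁ + x₂)
    (hg : 0 < gg n m x₁ x₂ 2 + 1) :
    rsig n m x₁ x₂ (pp n m x₁ x₂ 0) = -(pp n m x₁ x₂ 1) ∧
    rsig n m x₁ x₂ (pp n m x₁ x₂ 1) =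
      pp n m x₁ x₂ 0 + (2 * gg n m x₁ x₂ 1) • pp n m x₁ x₂ 1 ∧
    (∀ v ∈ Submodule.span ℝ ({pp n m x₁ x₂ 0, pp n m x₁ x₂ 1} : Set (Fin 5 → ℝ)),
      rsig n m x₁ x₂ v ∈
        Submodule.span ℝ ({pp n m x₁ x₂ 0, pp n m x₁ x₂ 1} : Set (Fin 5 → ℝ))) := by
  have hnpos : 0 < n := by omega
  have hnne : (n:ℝ) ≠ 0 := by positivity
  have hA : Real.sqrt x₁ * Real.sqrt x₁ = x₁ := Real.mul_self_sqrt hx₁.le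
  have hB : Real.sqrt x₂ * Real.sqrt x₂ = x₂ := Real.mul_self_sqrt hx₂
  have hW : Real.sqrt (x₁ + x₂ - 1) * Real.sqrt (x₁ + x₂ - 1) = x₁ + x₂ - 1 :=
    Real.mul_self_sqrt (by linarith)
  -- index rewrites
  have hcn1 : cc n ((n:ℤ) - 1) = cc n 1 := by
    rw [show ((n:ℤ) - 1) = -1 + 1*(n:ℤ) by ring, cc_shift n hnne, cc_neg]
  have hsn1 : ss n ((n:ℤ) - 1) = -ss n 1 := by
    rw [show ((n:ℤ) - 1) = -1 + 1*(n:ℤ) by ring, ss_shift n hnne, ss_neg]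
  have hcmn : cc n ((m:ℤ) * ((n:ℤ) - 1)) = cc n ((m:ℤ)*1) := by
    rw [show ((m:ℤ) * ((n:ℤ) - 1)) = -((m:ℤ)*1) + (m:ℤ)*(n:ℤ) by ring, cc_shift n hnne, cc_neg]
  have hsmn : ss n ((m:ℤ) * ((n:ℤ) - 1)) = -ss n ((m:ℤ)*1) := by
    rw [show ((m:ℤ) * ((n:ℤ) - 1)) = -((m:ℤ)*1) + (m:ℤ)*(n:ℤ) by ring, ss_shift n hnne, ss_neg]
  have h2 : cc n 2 = cc n 1 ^ 2 - ss n 1 ^ 2 := by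
    rw [show (2:ℤ) = 2*1 by ring]; exact cc_two' n 1
  have h2m : cc n ((m:ℤ)*2) = cc n ((m:ℤ)*1) ^ 2 - ss n ((m:ℤ)*1) ^ 2 := by
    rw [show ((m:ℤ)*2) = 2*((m:ℤ)*1) by ring]; exact cc_two' n ((m:ℤ)*1)
  have hc1 : cc n 1 = Real.cos (2*π/(n:ℝ)) := by rw [cc]; norm_num
  have hs1 : ss n 1 = Real.sin (2*π/(n:ℝ)) := by rw [ss]; norm_num
  have hcm1 : cc n ((m:ℤ)) = Real.cos (2*π*(m:ℝ)/(n:ℝ)) := by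
    rw [cc]; push_cast; ring_nf
  have hsm1 : ss n ((m:ℤ)) = Real.sin (2*π*(m:ℝ)/(n:ℝ)) := by
    rw [ss]; push_cast; ring_nf
  -- B5 computations
  have hB00 : B5 (pp n m x₁ x₂ 0) (pp n m x₁ x₂ 0) = -1 := by
    simp only [B5, pp, mul_zero, mul_one, cc_zero, ss_zero, Matrix.cons_val_zero,
      Matrix.cons_val_one, Matrix.head_cons, Matrix.cons_val_two, Matrix.tail_cons,
      Matrix.cons_val_three, Matrix.cons_val_four]
    linear_combination -hA - hB + hW
  have hB0d : B5 (pp n m x₁ x₂ 0)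
      (pp n m x₁ x₂ 1 - pp n m x₁ x₂ ((n:ℤ) - 1)) = 0 := by
    simp only [B5, pp, Pi.sub_apply, mul_zero, mul_one, cc_zero, ss_zero, hcn1, hsn1, hcmn, hsmn,
      Matrix.cons_val_zero, Matrix.cons_val_one, Matrix.head_cons, Matrix.cons_val_two,
      Matrix.tail_cons, Matrix.cons_val_three, Matrix.cons_val_four]
    ring
  have hg1sym : B5 (pp n m x₁ x₂ 1) (pp n m x₁ x₂ 0) = gg n m x₁ x₂ 1 := by
    rw [gg]; simp only [B5]; ring
  have hB11 : B5 (pp n m x₁ x₂ 1) (pp n m x₁ x₂ 1) = -1 := by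
    simp only [B5, pp, Matrix.cons_val_zero, Matrix.cons_val_one, Matrix.head_cons,
      Matrix.cons_val_two, Matrix.tail_cons, Matrix.cons_val_three, Matrix.cons_val_four]
    linear_combination (-(Real.sqrt x₁ * Real.sqrt x₁)) * pyth n 1 +
      (-(Real.sqrt x₂ * Real.sqrt x₂)) * pyth n ((m:ℤ)*1) - hA - hB + hW
  have hB1n : B5 (pp n m x₁ x₂ 1) (pp n m x₁ x₂ ((n:ℤ) - 1)) = gg n m x₁ x₂ 2 := by
    rw [gg]
    simp only [B5, pp, mul_zero, mul_one, cc_zero, ss_zero, hcn1, hsn1, hcmn, hsmn, h2, h2m,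
      Matrix.cons_val_zero, Matrix.cons_val_one, Matrix.head_cons, Matrix.cons_val_two,
      Matrix.tail_cons, Matrix.cons_val_three, Matrix.cons_val_four]
    ring
  have hB1d : B5 (pp n m x₁ x₂ 1)
      (pp n m x₁ x₂ 1 - pp n m x₁ x₂ ((n:ℤ) - 1)) = -(gg n m x₁ x₂ 2 + 1) := by
    rw [B5_sub, hB11, hB1n]; ring
  -- sigma on p0, p1
  have hsig0 : sig n m x₁ x₂ (pp n m x₁ x₂ 0) = -(pp n m x₁ x₂ 0) := by
    rw [sig, hB00, hB0d]
    funext i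
    simp only [Pi.add_apply, Pi.smul_apply, Pi.sub_apply, Pi.neg_apply, smul_eq_mul, zero_div]
    ring
  have hsig1 : sig n m x₁ x₂ (pp n m x₁ x₂ 1) =
      (2 * gg n m x₁ x₂ 1) • pp n m x₁ x₂ 0 + pp n m x₁ x₂ ((n:ℤ) - 1) := by
    rw [sig, hg1sym, hB1d, neg_div, div_self hg.ne']
    funext i
    simp only [Pi.add_apply, Pi.smul_apply, Pi.sub_apply, smul_eq_mul]
    ring
  -- rot on p0, p_{n-1}
  have hrot0 : (rot n m).mulVec (pp n m x₁ x₂ 0) = pp n m x₁ x₂ 1 := by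
    funext i
    fin_cases i <;>
      simp [rot, pp, Matrix.mulVec, dotProduct, Fin.sum_univ_five, cc_zero, ss_zero,
        hc1, hs1, hcm1, hsm1, mul_zero, mul_one] <;>
      first
        | ring1
        | linear_combination Real.sqrt x₁ * Real.sin_sq_add_cos_sq (2*π/(n:ℝ))
        | linear_combination Real.sqrt x₂ * Real.sin_sq_add_cos_sq (2*π*(m:ℝ)/(n:ℝ))
  have hrotn1 : (rot n m).mulVec (pp n m x₁ x₂ ((n:ℤ) - 1)) = pp n m x₁ x₂ 0 := by
    funext i
    fin_cases i <;>
      simp [rot, pp, Matrix.mulVec, dotProduct, Fin.sum_univ_five, cc_zero, ss_zero,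
        hcn1, hsn1, hcmn, hsmn, hc1, hs1, hcm1, hsm1, mul_zero, mul_one] <;>
      first
        | ring1
        | linear_combination Real.sqrt x₁ * Real.sin_sq_add_cos_sq (2*π/(n:ℝ))
        | linear_combination Real.sqrt x₂ * Real.sin_sq_add_cos_sq (2*π*(m:ℝ)/(n:ℝ))
  -- conclusions
  have c1 : rsig n m x₁ x₂ (pp n m x₁ x₂ 0) = -(pp n m x₁ x₂ 1) := by
    rw [rsig, hsig0, Matrix.mulVec_neg, hrot0]
  have c2 : rsig n m x₁ x₂ (pp n m x₁ x₂ 1) =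
      pp n m x₁ x₂ 0 + (2 * gg n m x₁ x₂ 1) • pp n m x₁ x₂ 1 := by
    rw [rsig, hsig1, Matrix.mulVec_add, Matrix.mulVec_smul, hrot0, hrotn1, add_comm]
  refine ⟨c1, c2, ?_⟩
  intro v hv
  rw [Submodule.mem_span_pair] at hv
  obtain ⟨a, b, rfl⟩ := hv
  have hlin : rsig n m x₁ x₂ (a • pp n m x₁ x₂ 0 + b • pp n m x₁ x₂ 1) =
      a • rsig n m x₁ x₂ (pp n m x₁ x₂ 0) + b • rsig n m x₁ x₂ (pp n m x₁ x₂ 1) := by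
    rw [rsig, rsig, rsig, sig_lin, Matrix.mulVec_add, Matrix.mulVec_smul, Matrix.mulVec_smul]
  rw [hlin, c1, c2]
  have h0 : pp n m x₁ x₂ 0 ∈ Submodule.span ℝ
      ({pp n m x₁ x₂ 0, pp n m x₁ x₂ 1} : Set (Fin 5 → ℝ)) :=
    Submodule.subset_span (by simp)
  have h1 : pp n m x₁ x₂ 1 ∈ Submodule.span ℝ
      ({pp n m x₁ x₂ 0, pp n m x₁ x₂ 1} : Set (Fin 5 → ℝ)) :=
    Submodule.subset_span (by simp)
  exact Submodule.add_mem _ (Submodule.smul_mem _ _ (Submodule.neg_mem _ h1))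
    (Submodule.smul_mem _ _ (Submodule.add_mem _ h0 (Submodule.smul_mem _ _ h1)))
end

section
/- Assume g₂ + 1 > 0. Then the trace of the linear map rσ equals 1 + 2c₁ + 2c_m + 2g₁ + (g₁ − g₃)/(g₂ + 1). -/
open Real Matrix

/-- The signature coefficients of the form ⟨x,y⟩ = Σ ηⱼ xⱼ yⱼ. -/
noncomputable def eta : Fin 5 → ℝ := ![-1, -1, -1, -1, 1]

/-- The matrix of the linear map σ in the standard basis. -/
noncomputable def sigMat (n m : ℕ) (x₁ x₂ : ℝ) : Matrix (Fin 5) (Fin 5) ℝ :=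
  Matrix.of fun i j =>
    (if i = j then (1 : ℝ) else 0)
    + 2 * pp n m x₁ x₂ 0 i * (eta j * pp n m x₁ x₂ 0 j)
    + (pp n m x₁ x₂ 1 - pp n m x₁ x₂ ((n : ℤ) - 1)) i *
        (eta j * (pp n m x₁ x₂ 1 - pp n m x₁ x₂ ((n : ℤ) - 1)) j) / (gg n m x₁ x₂ 2 + 1)

set_option maxHeartbeats 1000000 in
theorem stmt10 (n m : ℕ) (hn : Even n) (hn6 : 6 ≤ n) (hm1 : 1 < m) (hm2 : 2 * m < n)
    (x₁ x₂ : ℝ) (hx₁ : 0 < x₁) (hx₂ : 0 ≤ x₂) (hx : 1 < x₁ + x₂)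
    (hg : 0 < gg n m x₁ x₂ 2 + 1) :
    (∀ v : Fin 5 → ℝ, (rot n m * sigMat n m x₁ x₂).mulVec v = rsig n m x₁ x₂ v) ∧
    (rot n m * sigMat n m x₁ x₂).trace =
      1 + 2 * cc n 1 + 2 * cc n m + 2 * gg n m x₁ x₂ 1 +
        (gg n m x₁ x₂ 1 - gg n m x₁ x₂ 3) / (gg n m x₁ x₂ 2 + 1) := by
  constructor
  · intro v
    rw [← Matrix.mulVec_mulVec]
    unfold rsig
    congr 1
    funext k
    simp only [sigMat, sig, Matrix.mulVec, dotProduct, Fin.sum_univ_five,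
      Matrix.of_apply, Pi.add_apply, Pi.smul_apply, Pi.sub_apply, smul_eq_mul, B5, eta]
    fin_cases k <;> simp <;> ring
  ·
    have hn0 : (n:ℝ) ≠ 0 := Nat.cast_ne_zero.mpr (by omega)
    have ha : Real.sqrt x₁ * Real.sqrt x₁ = x₁ := Real.mul_self_sqrt hx₁.le
    have hb : Real.sqrt x₂ * Real.sqrt x₂ = x₂ := Real.mul_self_sqrt hx₂
    have hd : Real.sqrt (x₁ + x₂ - 1) * Real.sqrt (x₁ + x₂ - 1) = x₁ + x₂ - 1 :=
      Real.mul_self_sqrt (by linarith)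
    -- cc / ss special values
    have cc0 : cc n 0 = 1 := by simp [cc]
    have ss0 : ss n 0 = 0 := by simp [ss]
    have cc1 : cc n 1 = Real.cos (2*π/n) := by unfold cc; norm_num
    have ss1 : ss n 1 = Real.sin (2*π/n) := by unfold ss; norm_num
    have ccm : cc n (m:ℤ) = Real.cos (2*π*m/n) := by unfold cc; congr 1; push_cast; ring
    have ssm : ss n (m:ℤ) = Real.sin (2*π*m/n) := by unfold ss; congr 1; push_cast; ring
    have cc2 : cc n 2 = 2 * Real.cos (2*π/n)^2 - 1 := by
      unfold cc
      have h : 2*((2:ℤ):ℝ)*π/n = 2*(2*π/n) := by push_cast; ring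
      rw [h, Real.cos_two_mul]
    have ccm2 : cc n ((m:ℤ)*2) = 2 * Real.cos (2*π*m/n)^2 - 1 := by
      unfold cc
      have h : 2*(((m:ℤ)*2 : ℤ):ℝ)*π/n = 2*(2*π*m/n) := by push_cast; ring
      rw [h, Real.cos_two_mul]
    have cc3 : cc n 3 = 4 * Real.cos (2*π/n)^3 - 3 * Real.cos (2*π/n) := by
      unfold cc
      have h : 2*((3:ℤ):ℝ)*π/n = 3*(2*π/n) := by push_cast; ring
      rw [h, Real.cos_three_mul]
    have ccm3 : cc n ((m:ℤ)*3) = 4 * Real.cos (2*π*m/n)^3 - 3 * Real.cos (2*π*m/n) := by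
      unfold cc
      have h : 2*(((m:ℤ)*3 : ℤ):ℝ)*π/n = 3*(2*π*m/n) := by push_cast; ring
      rw [h, Real.cos_three_mul]
    have ccn1 : cc n ((n:ℤ)-1) = Real.cos (2*π/n) := by
      unfold cc
      have h : 2*((((n:ℤ)-1) : ℤ):ℝ)*π/n = (-(2*π/n)) + (1:ℤ)*(2*π) := by
        push_cast; field_simp; ring
      rw [h, Real.cos_add_int_mul_two_pi, Real.cos_neg]
    have ssn1 : ss n ((n:ℤ)-1) = -Real.sin (2*π/n) := by
      unfold ss
      have h : 2*((((n:ℤ)-1) : ℤ):ℝ)*π/n = (-(2*π/n)) + (1:ℤ)*(2*π) := by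
        push_cast; field_simp; ring
      rw [h, Real.sin_add_int_mul_two_pi, Real.sin_neg]
    have ccmn1 : cc n ((m:ℤ)*((n:ℤ)-1)) = Real.cos (2*π*m/n) := by
      unfold cc
      have h : 2*(((m:ℤ)*((n:ℤ)-1) : ℤ):ℝ)*π/n = (-(2*π*m/n)) + (m:ℤ)*(2*π) := by
        push_cast; field_simp; ring
      rw [h, Real.cos_add_int_mul_two_pi, Real.cos_neg]
    have ssmn1 : ss n ((m:ℤ)*((n:ℤ)-1)) = -Real.sin (2*π*m/n) := by
      unfold ss
      have h : 2*(((m:ℤ)*((n:ℤ)-1) : ℤ):ℝ)*π/n = (-(2*π*m/n)) + (m:ℤ)*(2*π) := by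
        push_cast; field_simp; ring
      rw [h, Real.sin_add_int_mul_two_pi, Real.sin_neg]
    have hgg : ∀ i : ℤ, gg n m x₁ x₂ i =
        -(cc n i * x₁) - cc n ((m:ℤ)*i) * x₂ + (x₁ + x₂ - 1) := by
      intro i
      simp only [gg, B5, pp, Matrix.cons_val_zero, Matrix.cons_val_one, Matrix.head_cons,
        Matrix.cons_val_two, Matrix.tail_cons, Matrix.cons_val_three, Matrix.cons_val_four,
        cc0, ss0, mul_zero]
      linear_combination (-(cc n i)) * ha + (-(cc n ((m:ℤ)*i))) * hb + hd
    have hG : gg n m x₁ x₂ 2 + 1 ≠ 0 := ne_of_gt hg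
    rw [Matrix.trace]
    simp only [Matrix.diag, Matrix.mul_apply, Fin.sum_univ_five, rot, sigMat, Matrix.of_apply,
      Matrix.cons_val', Matrix.cons_val_zero, Matrix.cons_val_one, Matrix.head_cons,
      Matrix.empty_val', Matrix.cons_val_fin_one, Matrix.head_fin_const,
      Matrix.cons_val_two, Matrix.tail_cons, Matrix.cons_val_three, Matrix.cons_val_four,
      pp, Pi.sub_apply, eta, hgg, cc0, ss0, cc1, ss1, ccm, ssm, cc2, ccm2, cc3, ccm3,
      ccn1, ssn1, ccmn1, ssmn1, mul_zero, mul_one, if_true, if_false, Fin.reduceEq, reduceIte]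
    have hG' : -((2*Real.cos (2*π/n)^2-1) * x₁) - (2*Real.cos (2*π*(m:ℝ)/n)^2-1)*x₂ + (x₁+x₂-1) + 1 ≠ 0 := by
      have h2 := hG
      rw [hgg 2, cc2, ccm2] at h2
      exact h2
    field_simp [hG']
    ring_nf
    simp only [Real.sin_sq, Real.sq_sqrt hx₁.le, Real.sq_sqrt hx₂,
      Real.sq_sqrt (show (0:ℝ) ≤ x₁ + x₂ - 1 by linarith),
      Real.sq_sqrt (show (0:ℝ) ≤ -1 + x₁ + x₂ by linarith)]
    ring
end

section
/- Suppose 1 < k < m < n/2 with n even. Then the linear system (1−c₁)x₁ + (1−c_m)x₂ = 1, (1−c₁²)(c_k − c_m)x₁ = (1−c_m²)(c₁ − c_k)x₂ in the unknowns (x₁, x₂) has a unique solution, and this solution satisfies x₁ > 0 and x₂ > 0. -/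
open Real

/-! Since `cos` is strictly decreasing on `[0, π]`, `1 > c₁ > c_k > c_m > -1`, so all four
coefficients of the system are positive; Cramer's rule then gives the unique solution
`(B / D, A / D)` with `D = aB + bA > 0`. -/

section LinearSystem

variable {a b A B : ℝ}

theorem linear_system_iff (hD : a * B + b * A ≠ 0) (q : ℝ × ℝ) :
    (a * q.1 + b * q.2 = 1 ∧ A * q.1 = B * q.2) ↔
      q = (B / (a * B + b * A), A / (a * B + b * A)) := by
  obtain ⟨x, y⟩ := q
  constructor
  · rintro ⟨h₁, h₂⟩
    simp only [Prod.mk.injEq, eq_div_iff hD] at h₁ h₂ ⊢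
    constructor
    · linear_combination B * h₁ + b * h₂
    · linear_combination A * h₁ - a * h₂
  · rintro ⟨⟩
    constructor <;> field_simp

theorem linear_system_existsUnique_pos (ha : 0 < a) (hb : 0 < b) (hA : 0 < A) (hB : 0 < B) :
    (∃! q : ℝ × ℝ, a * q.1 + b * q.2 = 1 ∧ A * q.1 = B * q.2) ∧
      ∀ q : ℝ × ℝ, (a * q.1 + b * q.2 = 1 ∧ A * q.1 = B * q.2) → 0 < q.1 ∧ 0 < q.2 := by
  have hD : 0 < a * B + b * A := by positivity
  have hsol := linear_system_iff hD.ne'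
  refine ⟨⟨_, (hsol _).2 rfl, fun q hq => (hsol q).1 hq⟩, fun q hq => ?_⟩
  rw [(hsol q).1 hq]
  exact ⟨by positivity, by positivity⟩

end LinearSystem

section Cosines

variable {n : ℕ}

theorem cc_lt_cc {i j : ℕ} (hij : i < j) (hj : 2 * j ≤ n) : cc n j < cc n i := by
  have hn : (0 : ℝ) < n := by exact_mod_cast (show 0 < n by omega)
  have hij' : (i : ℝ) < j := by exact_mod_cast hij
  have hj' : 2 * (j : ℝ) ≤ n := by exact_mod_cast hj
  simp only [cc, Int.cast_natCast]
  apply Real.cos_lt_cos_of_nonneg_of_le_pi (by positivity)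
  · rw [div_le_iff₀ hn]; nlinarith [pi_pos]
  · gcongr

theorem cc_one_lt_one (hn : 2 ≤ n) : cc n 1 < 1 := by
  simpa [cc] using cc_lt_cc (n := n) zero_lt_one hn

theorem neg_one_lt_cc {m : ℕ} (hm : 2 * m < n) : -1 < cc n m := by
  have hn : (0 : ℝ) < n := by exact_mod_cast (show 0 < n by omega)
  have hm' : 2 * (m : ℝ) < n := by exact_mod_cast hm
  rw [← Real.cos_pi, cc, Int.cast_natCast]
  apply Real.cos_lt_cos_of_nonneg_of_le_pi (by positivity) le_rfl
  rw [div_lt_iff₀ hn]; nlinarith [pi_pos]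

end Cosines

theorem stmt12_general (n k m : ℕ)
    (hk : 1 < k) (hkm : k < m) (hm : 2 * m < n) :
    (∃! q : ℝ × ℝ,
      (1 - cc n 1) * q.1 + (1 - cc n m) * q.2 = 1 ∧
      (1 - cc n 1 ^ 2) * (cc n k - cc n m) * q.1 =
        (1 - cc n m ^ 2) * (cc n 1 - cc n k) * q.2) ∧
    (∀ q : ℝ × ℝ,
      ((1 - cc n 1) * q.1 + (1 - cc n m) * q.2 = 1 ∧
       (1 - cc n 1 ^ 2) * (cc n k - cc n m) * q.1 =
         (1 - cc n m ^ 2) * (cc n 1 - cc n k) * q.2) →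
      0 < q.1 ∧ 0 < q.2) := by
  have h1k : cc n k < cc n 1 := cc_lt_cc hk (by omega)
  have hkm' : cc n m < cc n k := cc_lt_cc hkm (by omega)
  have hc1 : cc n 1 < 1 := cc_one_lt_one (by omega)
  have hcm : -1 < cc n m := neg_one_lt_cc hm
  apply linear_system_existsUnique_pos
  · linarith
  · linarith
  · exact mul_pos (by nlinarith) (by linarith)
  · exact mul_pos (by nlinarith) (by linarith)

theorem stmt12 (n k m : ℕ) (hn : Even n) (hn6 : 6 ≤ n)
    (hk : 1 < k) (hkm : k < m) (hm : 2 * m < n) :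
    (∃! q : ℝ × ℝ,
      (1 - cc n 1) * q.1 + (1 - cc n m) * q.2 = 1 ∧
      (1 - cc n 1 ^ 2) * (cc n k - cc n m) * q.1 =
        (1 - cc n m ^ 2) * (cc n 1 - cc n k) * q.2) ∧
    (∀ q : ℝ × ℝ,
      ((1 - cc n 1) * q.1 + (1 - cc n m) * q.2 = 1 ∧
       (1 - cc n 1 ^ 2) * (cc n k - cc n m) * q.1 =
         (1 - cc n m ^ 2) * (cc n 1 - cc n k) * q.2) →
      0 < q.1 ∧ 0 < q.2) :=
  stmt12_general n k m hk hkm hm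
end

section
/- Let n = 24, m = 6, k = 3, and let (x₁, x₂) be the unique real solution of the system (1−c₁)x₁ + (1−c₆)x₂ = 1, (1−c₁²)(c₃ − c₆)x₁ = (1−c₆²)(c₁ − c₃)x₂. Then 2 < (1−cᵢ)x₁ + (1−c_{6i})x₂ for every integer i with 2 ≤ i ≤ 12. -/
open Real

/-- For n = 24: cᵢ = cos(2iπ/24) = cos(iπ/12). -/
noncomputable def c24 (i : ℤ) : ℝ := Real.cos (i * π / 12)

lemma sqrt2_bounds : (1.4142:ℝ) < Real.sqrt 2 ∧ Real.sqrt 2 < 1.41422 := by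
  have hs2 : Real.sqrt 2 ^ 2 = 2 := Real.sq_sqrt (by norm_num)
  have hn : (0:ℝ) ≤ Real.sqrt 2 := Real.sqrt_nonneg 2
  constructor <;> nlinarith

lemma sqrt3_bounds : (1.73205:ℝ) < Real.sqrt 3 ∧ Real.sqrt 3 < 1.73206 := by
  have hs3 : Real.sqrt 3 ^ 2 = 3 := Real.sq_sqrt (by norm_num)
  have hn : (0:ℝ) ≤ Real.sqrt 3 := Real.sqrt_nonneg 3
  constructor <;> nlinarith

lemma auxA (x : ℝ)
    (h : (3 + Real.sqrt 3 - Real.sqrt 2 * Real.sqrt 3 - Real.sqrt 2) * x = 4) :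
    4.54 < x ∧ x < 4.66 := by
  obtain ⟨h2l, h2u⟩ := sqrt2_bounds
  obtain ⟨h3l, h3u⟩ := sqrt3_bounds
  have hp2 : (0:ℝ) < Real.sqrt 2 := by linarith
  have hp3 : (0:ℝ) < Real.sqrt 3 := by linarith
  have hpl : Real.sqrt 2 * Real.sqrt 3 < 2.44952 := by
    nlinarith [mul_lt_mul_of_pos_left h3u hp2, mul_lt_mul_of_pos_right h2u hp3]
  have hpu : (2.44946:ℝ) < Real.sqrt 2 * Real.sqrt 3 := by
    nlinarith [mul_lt_mul_of_pos_right h2l hp3, mul_lt_mul_of_pos_left h3l hp2]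
  set D := 3 + Real.sqrt 3 - Real.sqrt 2 * Real.sqrt 3 - Real.sqrt 2 with hD
  have hdl : (0.86:ℝ) < D := by rw [hD]; linarith
  have hdu : D < 0.88 := by rw [hD]; linarith
  have hx0 : 0 < x := by
    by_contra hc
    push_neg at hc
    have : D * x ≤ 0 := mul_nonpos_of_nonneg_of_nonpos (by linarith) hc
    linarith
  constructor <;> nlinarith

lemma auxB (x₁ x₂ : ℝ) (hb : x₂ = (Real.sqrt 3 - 1) / 4 * x₁)
    (h1 : 4.54 < x₁) : 0.83 < x₂ := by
  obtain ⟨h3l, h3u⟩ := sqrt3_bounds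
  rw [hb]
  nlinarith

lemma auxL1 (x₁ x₂ c : ℝ) (b1 : 4.54 < x₁) (hc : c ≤ 0.51) :
    2 < (1 - c) * x₁ + (1 - 1) * x₂ := by
  nlinarith [mul_lt_mul_of_pos_left b1 (show (0:ℝ) < 1 - c by linarith)]

lemma auxL2 (x₁ x₂ c : ℝ) (b1 : 4.54 < x₁) (b2 : 0.83 < x₂) (hc : c ≤ 0.71) :
    2 < (1 - c) * x₁ + (1 - 0) * x₂ := by
  nlinarith [mul_lt_mul_of_pos_left b1 (show (0:ℝ) < 1 - c by linarith)]

lemma auxL3 (x₁ x₂ c : ℝ) (b1 : 4.54 < x₁) (b2 : 0.83 < x₂) (hc : c ≤ 0.87) :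
    2 < (1 - c) * x₁ + (1 - (-1)) * x₂ := by
  nlinarith [mul_lt_mul_of_pos_left b1 (show (0:ℝ) < 1 - c by linarith)]

lemma auxC1 : Real.sqrt 3 / 2 ≤ 0.87 := by
  obtain ⟨_, h⟩ := sqrt3_bounds; linarith

lemma auxC2 : Real.sqrt 2 / 2 ≤ 0.71 := by
  obtain ⟨_, h⟩ := sqrt2_bounds; linarith

lemma auxC3 : Real.sqrt 2 * (Real.sqrt 3 - 1) / 4 ≤ 0.71 := by
  obtain ⟨h2l, h2u⟩ := sqrt2_bounds
  obtain ⟨h3l, h3u⟩ := sqrt3_bounds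
  nlinarith

lemma auxC4 : -(Real.sqrt 2 * (Real.sqrt 3 - 1) / 4) ≤ 0.71 := by
  obtain ⟨h2l, h2u⟩ := sqrt2_bounds
  obtain ⟨h3l, h3u⟩ := sqrt3_bounds
  nlinarith

lemma auxC5 : -(Real.sqrt 2 / 2) ≤ 0.71 := by
  have := Real.sqrt_nonneg 2; linarith

lemma auxC6 : -(Real.sqrt 3 / 2) ≤ 0.87 := by
  have := Real.sqrt_nonneg 3; linarith

lemma auxC7 : -(Real.sqrt 2 * (1 + Real.sqrt 3) / 4) ≤ 0.71 := by
  have h2 := Real.sqrt_nonneg 2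
  have h3 := Real.sqrt_nonneg 3
  nlinarith

theorem stmt16 (x₁ x₂ : ℝ)
    (h1 : (1 - c24 1) * x₁ + (1 - c24 6) * x₂ = 1)
    (h2 : (1 - c24 1 ^ 2) * (c24 3 - c24 6) * x₁ =
      (1 - c24 6 ^ 2) * (c24 1 - c24 3) * x₂) :
    ∀ i : ℤ, 2 ≤ i → i ≤ 12 → 2 < (1 - c24 i) * x₁ + (1 - c24 (6 * i)) * x₂ := by
  have hs2 : Real.sqrt 2 ^ 2 = 2 := Real.sq_sqrt (by norm_num)
  have hs3 : Real.sqrt 3 ^ 2 = 3 := Real.sq_sqrt (by norm_num)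
  have hs2pos : (0:ℝ) < Real.sqrt 2 := by
    have := sqrt2_bounds.1; linarith
  -- cosine values
  have v1 : c24 1 = Real.sqrt 2 * (1 + Real.sqrt 3) / 4 := by
    unfold c24
    have h : ((1:ℤ):ℝ) * π / 12 = π/3 - π/4 := by push_cast; ring
    rw [h, Real.cos_sub, Real.cos_pi_div_three, Real.cos_pi_div_four,
      Real.sin_pi_div_three, Real.sin_pi_div_four]
    ring
  have v2 : c24 2 = Real.sqrt 3 / 2 := by
    unfold c24
    have h : ((2:ℤ):ℝ) * π / 12 = π/6 := by push_cast; ring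
    rw [h, Real.cos_pi_div_six]
  have v3 : c24 3 = Real.sqrt 2 / 2 := by
    unfold c24
    have h : ((3:ℤ):ℝ) * π / 12 = π/4 := by push_cast; ring
    rw [h, Real.cos_pi_div_four]
  have v4 : c24 4 = 1/2 := by
    unfold c24
    have h : ((4:ℤ):ℝ) * π / 12 = π/3 := by push_cast; ring
    rw [h, Real.cos_pi_div_three]
  have v5 : c24 5 = Real.sqrt 2 * (Real.sqrt 3 - 1) / 4 := by
    unfold c24
    have h : ((5:ℤ):ℝ) * π / 12 = π/4 + π/6 := by push_cast; ring
    rw [h, Real.cos_add, Real.cos_pi_div_four, Real.cos_pi_div_six,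
      Real.sin_pi_div_four, Real.sin_pi_div_six]
    ring
  have v6 : c24 6 = 0 := by
    unfold c24
    have h : ((6:ℤ):ℝ) * π / 12 = π/2 := by push_cast; ring
    rw [h, Real.cos_pi_div_two]
  have v7 : c24 7 = -(Real.sqrt 2 * (Real.sqrt 3 - 1) / 4) := by
    unfold c24
    have h : ((7:ℤ):ℝ) * π / 12 = π - (π/4 + π/6) := by push_cast; ring
    rw [h, Real.cos_pi_sub, Real.cos_add, Real.cos_pi_div_four, Real.cos_pi_div_six,
      Real.sin_pi_div_four, Real.sin_pi_div_six]
    ring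
  have v8 : c24 8 = -(1/2) := by
    unfold c24
    have h : ((8:ℤ):ℝ) * π / 12 = π - π/3 := by push_cast; ring
    rw [h, Real.cos_pi_sub, Real.cos_pi_div_three]
  have v9 : c24 9 = -(Real.sqrt 2 / 2) := by
    unfold c24
    have h : ((9:ℤ):ℝ) * π / 12 = π - π/4 := by push_cast; ring
    rw [h, Real.cos_pi_sub, Real.cos_pi_div_four]
  have v10 : c24 10 = -(Real.sqrt 3 / 2) := by
    unfold c24
    have h : ((10:ℤ):ℝ) * π / 12 = π - π/6 := by push_cast; ring
    rw [h, Real.cos_pi_sub, Real.cos_pi_div_six]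
  have v11 : c24 11 = -(Real.sqrt 2 * (1 + Real.sqrt 3) / 4) := by
    unfold c24
    have h : ((11:ℤ):ℝ) * π / 12 = π - (π/3 - π/4) := by push_cast; ring
    rw [h, Real.cos_pi_sub, Real.cos_sub, Real.cos_pi_div_three, Real.cos_pi_div_four,
      Real.sin_pi_div_three, Real.sin_pi_div_four]
    ring
  have v12 : c24 12 = -1 := by
    unfold c24
    have h : ((12:ℤ):ℝ) * π / 12 = π := by push_cast; ring
    rw [h, Real.cos_pi]
  have c32 : Real.cos (2 * π - π/2) = 0 := by
    rw [Real.cos_two_pi_sub, Real.cos_pi_div_two]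
  have v18 : c24 18 = 0 := by
    unfold c24
    have h : ((18:ℤ):ℝ) * π / 12 = 2 * π - π/2 := by push_cast; ring
    rw [h, c32]
  have v24 : c24 24 = 1 := by
    unfold c24
    have h : ((24:ℤ):ℝ) * π / 12 = 2 * π := by push_cast; ring
    rw [h, Real.cos_two_pi]
  have v30 : c24 30 = 0 := by
    unfold c24
    have h : ((30:ℤ):ℝ) * π / 12 = π/2 + (1:ℤ) * (2 * π) := by push_cast; ring
    rw [h, Real.cos_add_int_mul_two_pi, Real.cos_pi_div_two]
  have v36 : c24 36 = -1 := by
    unfold c24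
    have h : ((36:ℤ):ℝ) * π / 12 = π + (1:ℤ) * (2 * π) := by push_cast; ring
    rw [h, Real.cos_add_int_mul_two_pi, Real.cos_pi]
  have v42 : c24 42 = 0 := by
    unfold c24
    have h : ((42:ℤ):ℝ) * π / 12 = (2 * π - π/2) + (1:ℤ) * (2 * π) := by push_cast; ring
    rw [h, Real.cos_add_int_mul_two_pi, c32]
  have v48 : c24 48 = 1 := by
    unfold c24
    have h : ((48:ℤ):ℝ) * π / 12 = 2 * π + (1:ℤ) * (2 * π) := by push_cast; ring
    rw [h, Real.cos_add_int_mul_two_pi, Real.cos_two_pi]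
  have v54 : c24 54 = 0 := by
    unfold c24
    have h : ((54:ℤ):ℝ) * π / 12 = π/2 + (2:ℤ) * (2 * π) := by push_cast; ring
    rw [h, Real.cos_add_int_mul_two_pi, Real.cos_pi_div_two]
  have v60 : c24 60 = -1 := by
    unfold c24
    have h : ((60:ℤ):ℝ) * π / 12 = π + (2:ℤ) * (2 * π) := by push_cast; ring
    rw [h, Real.cos_add_int_mul_two_pi, Real.cos_pi]
  have v66 : c24 66 = 0 := by
    unfold c24
    have h : ((66:ℤ):ℝ) * π / 12 = (2 * π - π/2) + (2:ℤ) * (2 * π) := by push_cast; ring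
    rw [h, Real.cos_add_int_mul_two_pi, c32]
  have v72 : c24 72 = 1 := by
    unfold c24
    have h : ((72:ℤ):ℝ) * π / 12 = 2 * π + (2:ℤ) * (2 * π) := by push_cast; ring
    rw [h, Real.cos_add_int_mul_two_pi, Real.cos_two_pi]
  -- solve the system
  rw [v1, v6] at h1
  rw [v1, v3, v6] at h2
  have key : (2 - Real.sqrt 3) / 8 * x₁ = (Real.sqrt 3 - 1) / 4 * x₂ := by
    have hne : (Real.sqrt 2 : ℝ) ≠ 0 := ne_of_gt hs2pos
    apply mul_left_cancel₀ hne
    linear_combination h2 + (Real.sqrt 2*x₁/32)*2*hs3 +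
      (Real.sqrt 2*x₁/32)*(4+2*Real.sqrt 3+(Real.sqrt 3^2-3))*hs2
  have hx2 : x₂ = (Real.sqrt 3 - 1) / 4 * x₁ := by
    linear_combination (-2*(Real.sqrt 3+1))*key - (x₂/2+x₁/4)*hs3
  have hx1eq : (3 + Real.sqrt 3 - Real.sqrt 2 * Real.sqrt 3 - Real.sqrt 2) * x₁ = 4 := by
    linear_combination 4*h1 - 4*hx2
  obtain ⟨hx1l, hx1u⟩ := auxA x₁ hx1eq
  have hx2l : (0.83:ℝ) < x₂ := auxB x₁ x₂ hx2 hx1l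
  clear h1 h2 key hx2 hx1eq
  intro i hil hiu
  interval_cases i
  · rw [v2, show ((6:ℤ)*2) = 12 by norm_num, v12]
    exact auxL3 _ _ _ hx1l hx2l auxC1
  · rw [v3, show ((6:ℤ)*3) = 18 by norm_num, v18]
    exact auxL2 _ _ _ hx1l hx2l auxC2
  · rw [v4, show ((6:ℤ)*4) = 24 by norm_num, v24]
    exact auxL1 _ x₂ _ hx1l (by norm_num)
  · rw [v5, show ((6:ℤ)*5) = 30 by norm_num, v30]
    exact auxL2 _ _ _ hx1l hx2l auxC3
  · rw [v6, show ((6:ℤ)*6) = 36 by norm_num, v36]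
    exact auxL3 _ _ _ hx1l hx2l (by norm_num)
  · rw [v7, show ((6:ℤ)*7) = 42 by norm_num, v42]
    exact auxL2 _ _ _ hx1l hx2l auxC4
  · rw [v8, show ((6:ℤ)*8) = 48 by norm_num, v48]
    exact auxL1 _ x₂ _ hx1l (by norm_num)
  · rw [v9, show ((6:ℤ)*9) = 54 by norm_num, v54]
    exact auxL2 _ _ _ hx1l hx2l auxC5
  · rw [v10, show ((6:ℤ)*10) = 60 by norm_num, v60]
    exact auxL3 _ _ _ hx1l hx2l auxC6
  · rw [v11, show ((6:ℤ)*11) = 66 by norm_num, v66]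
    exact auxL2 _ _ _ hx1l hx2l auxC7
  · rw [v12, show ((6:ℤ)*12) = 72 by norm_num, v72]
    exact auxL1 _ x₂ _ hx1l (by norm_num)
end
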